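/- Let X be a 2-valued group (n = 2) such that inv(a) = a for every a ∈ X. Then for every x ∈ X and every natural number r ≥ 1, the growth function of the dynamic T_x satisfies ξ_x(r) = |Set(x^{*r})| ≤ r·(r+1). In particular every such dynamic has polynomial growth. -/

import Mathlib

/-- An `n`-valued group: multiplication takes values in `n`-element multisets. -/
structure NValuedGroup (n : ℕ) (X : Type*) where
  mul : X → X → Multiset X
  e : X
  inv : X → X
  one_le : 1 ≤ n
  card_mul : ∀ x y, (mul x y).card = n
  assoc : ∀ x y z, (mul x y).bind (fun t => mul t z) = (mul y z).bind (fun t => mul x t)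
  e_mul : ∀ x, mul e x = Multiset.replicate n x
  mul_e : ∀ x, mul x e = Multiset.replicate n x
  inv_mul : ∀ x, e ∈ mul (inv x) x
  mul_inv : ∀ x, e ∈ mul x (inv x)

variable {n : ℕ} {X : Type*}

/-- The multiset `x * s₁ * ⋯ * s_k` (iterated left-to-right, starting from `{x}`). -/
def NValuedGroup.wordProd (G : NValuedGroup n X) (x : X) (l : List X) : Multiset X :=
  l.foldl (fun m s => m.bind (fun t => G.mul t s)) {x}

/-- The ball `B_S(x, r)`: elements lying in `Set(x * s₁ * ⋯ * s_m)` for some `m ≤ r`,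
`s₁, …, s_m ∈ S`. -/
def NValuedGroup.ball (G : NValuedGroup n X) (S : Set X) (x : X) (r : ℕ) : Set X :=
  {y | ∃ l : List X, l.length ≤ r ∧ (∀ s ∈ l, s ∈ S) ∧ y ∈ G.wordProd x l}

/-- `S` generates `X`: every element lies in `Set(s₁ * ⋯ * s_m)` for some `m ≥ 1`,
`s₁, …, s_m ∈ S`. -/
def NValuedGroup.IsGenSet (G : NValuedGroup n X) (S : Set X) : Prop :=
  ∀ x : X, ∃ s₀ ∈ S, ∃ l : List X, (∀ s ∈ l, s ∈ S) ∧ x ∈ G.wordProd s₀ l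

/-- `G.spow x i` is the multivalued power `x^{*(i+1)}`; so `x^{*r} = G.spow x (r-1)` for `r ≥ 1`. -/
def NValuedGroup.spow (G : NValuedGroup n X) (x : X) : ℕ → Multiset X
  | 0 => {x}
  | r + 1 => (G.spow x r).bind (fun t => G.mul t x)

/-- `B*(x, r) = ⋃_{i=1}^{r} Set(x^{*i})`; in particular `B*(x, 0) = ∅`. -/
def NValuedGroup.Bstar (G : NValuedGroup n X) (x : X) (r : ℕ) : Set X :=
  {y | ∃ i < r, y ∈ G.spow x i}

/-- `S*(x, r) = B*(x, r) \ B*(x, r-1)`. -/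
def NValuedGroup.Sstar (G : NValuedGroup n X) (x : X) (r : ℕ) : Set X :=
  G.Bstar x r \ G.Bstar x (r - 1)

/-!
Since `inv a = a`, every square is `a * a = {e, a'}`, so associativity gives
`(p * u) * u = p * {e, u'} = {p, p} + p * u'`. In particular
`Set(x^{*(r+2)}) = Set(x^{*r}) ∪ Set(x^{*r}) * x'`, so the sets `Set(x^{*r})` grow along each
parity class. Call `Set(x^{*r}) \ Set(x^{*(r-2)})` the frontier at `r`. Iterating the identity
with `u₁ = x'`, `u_{k+1} = u_k'`, every frontier element at `r + 2^k` lies in `w * u_k` for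
some frontier element `w` at `r`, the `{p, p}` terms being old elements. So the frontier at
most doubles from `j` to `j + 2^k`; choosing `r = j + 2^k` with `2j ≤ r` shows by induction
that the frontier at `r` has at most `r` elements, and summing over `r, r - 2, …` gives
`|Set(x^{*r})| ≤ r (r + 1)`.
-/

theorem Nat.exists_eq_add_two_pow {r : ℕ} (hr : 3 ≤ r) :
    ∃ j k, 1 ≤ j ∧ 1 ≤ k ∧ 2 * j ≤ r ∧ r = j + 2 ^ k := by
  have hr1 : r - 1 ≠ 0 := by omega
  have hlo : 2 ^ Nat.log 2 (r - 1) ≤ r - 1 := Nat.pow_log_le_self 2 hr1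
  have hhi : r - 1 < 2 ^ (Nat.log 2 (r - 1) + 1) := Nat.lt_pow_succ_log_self (by norm_num) _
  have hk : 1 ≤ Nat.log 2 (r - 1) := (Nat.le_log_iff_pow_le (by norm_num) hr1).mpr (by omega)
  rw [pow_succ] at hhi
  exact ⟨r - 2 ^ Nat.log 2 (r - 1), Nat.log 2 (r - 1), by omega, hk, by omega, by omega⟩

namespace NValuedGroup

section

variable (G : NValuedGroup n X)

theorem card_spow (x : X) (i : ℕ) : Multiset.card (G.spow x i) = n ^ i := by
  induction i with
  | zero => simp [spow]
  | succ i ih => simp [spow, Multiset.card_bind, G.card_mul, ih, pow_succ]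

theorem card_le_of_forall_exists_mem_mul [DecidableEq X] {s t : Finset X} {u : X}
    (h : ∀ y ∈ s, ∃ w ∈ t, y ∈ G.mul w u) : s.card ≤ n * t.card := by
  have hs : s ⊆ t.biUnion fun w => (G.mul w u).toFinset := fun y hy => by
    obtain ⟨w, hw, hyw⟩ := h y hy
    exact Finset.mem_biUnion.mpr ⟨w, hw, Multiset.mem_toFinset.mpr hyw⟩
  calc s.card ≤ (t.biUnion fun w => (G.mul w u).toFinset).card := Finset.card_le_card hs
    _ ≤ t.card * n := Finset.card_biUnion_le_card_mul _ _ _ fun w _ =>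
        (Multiset.toFinset_card_le _).trans (G.card_mul w u).le
    _ = n * t.card := Nat.mul_comm _ _

variable [DecidableEq X]

/-- `Set(x^{*r})`, with `Set(x^{*0}) = ∅`; note the shift against `spow`. -/
def powFinset (x : X) : ℕ → Finset X
  | 0 => ∅
  | r + 1 => (G.spow x r).toFinset

def powFrontier (x : X) (r : ℕ) : Finset X :=
  G.powFinset x r \ G.powFinset x (r - 2)

theorem mem_powFinset_succ {x y : X} {r : ℕ} : y ∈ G.powFinset x (r + 1) ↔ y ∈ G.spow x r :=
  Multiset.mem_toFinset

theorem card_powFinset_succ_le (x : X) (r : ℕ) : (G.powFinset x (r + 1)).card ≤ n ^ r := by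
  simpa [powFinset, G.card_spow] using Multiset.toFinset_card_le (G.spow x r)

end

section

variable (G : NValuedGroup 2 X)

theorem exists_mul_self_eq_cons {a : X} (ha : G.e ∈ G.mul a a) :
    ∃ v, G.mul a a = G.e ::ₘ {v} := by
  obtain ⟨t, ht⟩ := Multiset.exists_cons_of_mem ha
  have ht1 : Multiset.card t = 1 := by simpa [ht] using G.card_mul a a
  obtain ⟨v, rfl⟩ := Multiset.card_eq_one.mp ht1
  exact ⟨v, ht⟩

variable {G}

theorem bind_mul_mul_of_mul_self_eq {u v : X} (huv : G.mul u u = G.e ::ₘ {v}) (p : X) :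
    (G.mul p u).bind (fun t => G.mul t u) = Multiset.replicate 2 p + G.mul p v := by
  rw [G.assoc, huv, Multiset.cons_bind, Multiset.singleton_bind, G.mul_e]

theorem eq_or_mem_mul_of_mem_mul_mul {u v p w y : X} (huv : G.mul u u = G.e ::ₘ {v})
    (hw : w ∈ G.mul p u) (hy : y ∈ G.mul w u) : y = p ∨ y ∈ G.mul p v := by
  have hmem : y ∈ (G.mul p u).bind (fun t => G.mul t u) := Multiset.mem_bind.mpr ⟨w, hw, hy⟩
  rw [bind_mul_mul_of_mul_self_eq huv] at hmem
  simpa using hmem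

theorem mem_spow_add_two_iff {x v y : X} {r : ℕ} (hx : G.mul x x = G.e ::ₘ {v}) :
    y ∈ G.spow x (r + 2) ↔ y ∈ G.spow x r ∨ ∃ w ∈ G.spow x r, y ∈ G.mul w v := by
  have hspow : G.spow x (r + 2) =
      (G.spow x r).bind fun w => (G.mul w x).bind fun t => G.mul t x := Multiset.bind_assoc
  simp [hspow, bind_mul_mul_of_mul_self_eq hx]

variable [DecidableEq X]

theorem powFinset_subset_add_two {x v : X} (hx : G.mul x x = G.e ::ₘ {v}) (r : ℕ) :
    G.powFinset x r ⊆ G.powFinset x (r + 2) := by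
  cases r with
  | zero => simp [powFinset]
  | succ r =>
    intro y hy
    rw [mem_powFinset_succ] at hy ⊢
    exact (mem_spow_add_two_iff hx).mpr (Or.inl hy)

theorem powFinset_subset_add_two_mul {x v : X} (hx : G.mul x x = G.e ::ₘ {v}) (r m : ℕ) :
    G.powFinset x r ⊆ G.powFinset x (r + 2 * m) := by
  induction m with
  | zero => rfl
  | succ m ih => exact ih.trans (powFinset_subset_add_two hx _)

theorem mem_powFinset_add_two_of_mem_mul {x v : X} (hx : G.mul x x = G.e ::ₘ {v})
    {w y : X} {r : ℕ} (hw : w ∈ G.powFinset x r) (hy : y ∈ G.mul w v) :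
    y ∈ G.powFinset x (r + 2) := by
  cases r with
  | zero => simp [powFinset] at hw
  | succ r =>
    rw [mem_powFinset_succ] at hw ⊢
    exact (mem_spow_add_two_iff hx).mpr (Or.inr ⟨w, hw, hy⟩)

theorem exists_mem_powFrontier_of_mem_powFrontier_add_two {x v : X}
    (hx : G.mul x x = G.e ::ₘ {v}) {y : X} {r : ℕ} (hr : 1 ≤ r)
    (hy : y ∈ G.powFrontier x (r + 2)) :
    ∃ w ∈ G.powFrontier x r, y ∈ G.mul w v := by
  obtain ⟨s, rfl⟩ : ∃ s, r = s + 1 := ⟨r - 1, by omega⟩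
  simp only [powFrontier, Finset.mem_sdiff, Nat.add_sub_cancel] at hy ⊢
  obtain ⟨hy, hyr⟩ := hy
  rw [mem_powFinset_succ, mem_spow_add_two_iff hx] at hy
  obtain hys | ⟨w, hw, hyw⟩ := hy
  · exact absurd (G.mem_powFinset_succ.mpr hys) hyr
  refine ⟨w, ⟨G.mem_powFinset_succ.mpr hw, fun hw' => hyr ?_⟩, hyw⟩
  rcases Nat.lt_or_ge s 2 with hs | hs
  · simp [Nat.sub_eq_zero_of_le (show s + 1 ≤ 2 by omega), powFinset] at hw'
  · have hidx : s + 1 - 2 + 2 = s + 1 := by omega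
    exact hidx ▸ mem_powFinset_add_two_of_mem_mul hx hw' hyw

theorem exists_forall_mem_powFrontier_add_two_pow (hsq : ∀ a, G.e ∈ G.mul a a) (x : X) {k : ℕ}
    (hk : 1 ≤ k) :
    ∃ u, ∀ r, 1 ≤ r → ∀ y ∈ G.powFrontier x (r + 2 ^ k),
      ∃ w ∈ G.powFrontier x r, y ∈ G.mul w u := by
  induction k, hk using Nat.le_induction with
  | base =>
    obtain ⟨v, hx⟩ := G.exists_mul_self_eq_cons (hsq x)
    exact ⟨v, fun r hr y hy => exists_mem_powFrontier_of_mem_powFrontier_add_two hx hr hy⟩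
  | succ k hk ih =>
    obtain ⟨u, hu⟩ := ih
    obtain ⟨v, huv⟩ := G.exists_mul_self_eq_cons (hsq u)
    refine ⟨v, fun r hr y hy => ?_⟩
    rw [pow_succ, mul_two, ← add_assoc] at hy
    obtain ⟨w, hw, hyw⟩ := hu (r + 2 ^ k) (hr.trans (Nat.le_add_right _ _)) y hy
    obtain ⟨p, hp, hwp⟩ := hu r hr w hw
    refine ⟨p, hp, (eq_or_mem_mul_of_mem_mul_mul huv hwp hyw).resolve_left ?_⟩
    -- `y = p` is impossible: `p` is already in `Set(x^{*r})`, hence not new at `r + 2^(k+1)`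
    rintro rfl
    obtain ⟨v', hx⟩ := G.exists_mul_self_eq_cons (hsq x)
    have hidx : r + 2 ^ k + 2 ^ k - 2 = r + 2 * (2 ^ k - 1) := by
      have := Nat.one_le_two_pow (n := k)
      omega
    apply (Finset.mem_sdiff.mp hy).2
    rw [hidx]
    exact powFinset_subset_add_two_mul hx r _ (Finset.mem_sdiff.mp hp).1

theorem card_powFrontier_add_two_pow_le (hsq : ∀ a, G.e ∈ G.mul a a) (x : X) {k r : ℕ}
    (hk : 1 ≤ k) (hr : 1 ≤ r) :
    (G.powFrontier x (r + 2 ^ k)).card ≤ 2 * (G.powFrontier x r).card := by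
  obtain ⟨u, hu⟩ := exists_forall_mem_powFrontier_add_two_pow hsq x hk
  exact G.card_le_of_forall_exists_mem_mul (hu r hr)

theorem card_powFrontier_le (hsq : ∀ a, G.e ∈ G.mul a a) (x : X) (r : ℕ) :
    (G.powFrontier x r).card ≤ r := by
  induction r using Nat.strong_induction_on with
  | _ r ih =>
    rcases Nat.lt_or_ge r 3 with hr | hr
    · refine (Finset.card_le_card Finset.sdiff_subset).trans ?_
      interval_cases r
      · simp [powFinset]
      · exact G.card_powFinset_succ_le x 0
      · exact G.card_powFinset_succ_le x 1
    · obtain ⟨j, k, hj, hk, hjr, rfl⟩ := Nat.exists_eq_add_two_pow hr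
      calc (G.powFrontier x (j + 2 ^ k)).card ≤ 2 * (G.powFrontier x j).card :=
            card_powFrontier_add_two_pow_le hsq x hk hj
        _ ≤ 2 * j := Nat.mul_le_mul_left 2 (ih j (by omega))
        _ ≤ j + 2 ^ k := hjr

theorem card_powFinset_le (hsq : ∀ a, G.e ∈ G.mul a a) (x : X) (r : ℕ) :
    (G.powFinset x r).card ≤ r * (r + 1) := by
  induction r using Nat.strong_induction_on with
  | _ r ih =>
    rcases Nat.eq_zero_or_pos r with rfl | hr
    · simp [powFinset]
    calc (G.powFinset x r).card ≤ (G.powFrontier x r).card + (G.powFinset x (r - 2)).card :=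
          Finset.card_le_card_sdiff_add_card
      _ ≤ r + (r - 2) * (r - 2 + 1) :=
          Nat.add_le_add (card_powFrontier_le hsq x r) (ih (r - 2) (by omega))
      _ ≤ r + r * r := Nat.add_le_add_left (Nat.mul_le_mul (by omega) (by omega)) r
      _ = r * (r + 1) := by ring

end

end NValuedGroup

/-- In a 2-valued group with `inv = id`, the growth function of the dynamic `T_x` at `x`
satisfies `ξ_x(r) = |Set(x^{*r})| ≤ r·(r+1)`; recall `x^{*r} = G.spow x (r-1)`. -/
theorem two_valued_dynamic_growth (G : NValuedGroup 2 X) (hinv : ∀ a : X, G.inv a = a)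
    (x : X) : ∀ r : ℕ, 1 ≤ r →
      Nat.card ({y | y ∈ G.spow x (r - 1)} : Set X) ≤ r * (r + 1) := by
  classical
  intro r hr
  have hsq : ∀ a, G.e ∈ G.mul a a := fun a => by simpa [hinv] using G.inv_mul a
  obtain ⟨s, rfl⟩ : ∃ s, r = s + 1 := ⟨r - 1, by omega⟩
  have hset : {y | y ∈ G.spow x (s + 1 - 1)} = (G.powFinset x (s + 1) : Set X) := by
    ext y
    simp [NValuedGroup.powFinset]
  rw [hset, Nat.card_coe_set_eq, Set.ncard_coe_finset]
  exact G.card_powFinset_le hsq x (s + 1)
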